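/- Let N ≥ 1, let P_1,…,P_N > 0, let C > 0 and A ≥ 0 with a := A − C + 1 > 0, and suppose ξ > 0 is such that the vector Ω* defined by Ω*_n := max{(√(P_n/ξ) − C)/a, 0} satisfies Σ_{n=1}^N Ω*_n = 1. Then Ω* is a global maximizer of the objective Σ_{n=1}^N P_n·Ω_n/(a·Ω_n + C) over the simplex {Ω ∈ ℝ^N : Ω_n ≥ 0 for all n, Σ_n Ω_n = 1}. -/

import Mathlib

/-!
Each summand `x ↦ P x / (a x + C)` is concave on `x ≥ 0`, so it lies below its tangent line
at `Ω*_n`. The water-filling formula is exactly the KKT condition for the multiplier `C ξ`: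
the tangent slope `P C / (a Ω*_n + C)²` equals `C ξ` where `Ω*_n > 0` and is at most `C ξ`
where `Ω*_n = 0`. Summing the tangent bounds, the multiplier terms cancel because both
allocations sum to one.
-/

open Finset

theorem Finset.sum_le_sum_of_le_add_mul_sub {ι : Type*} (s : Finset ι) (f : ι → ℝ → ℝ)
    (x y : ι → ℝ) (c : ℝ) (h : ∀ i ∈ s, f i (x i) ≤ f i (y i) + c * (x i - y i))
    (hxy : ∑ i ∈ s, x i = ∑ i ∈ s, y i) :
    ∑ i ∈ s, f i (x i) ≤ ∑ i ∈ s, f i (y i) :=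
  calc ∑ i ∈ s, f i (x i) ≤ ∑ i ∈ s, (f i (y i) + c * (x i - y i)) := sum_le_sum h
    _ = ∑ i ∈ s, f i (y i) := by
      rw [sum_add_distrib, ← mul_sum, sum_sub_distrib, hxy, sub_self, mul_zero, add_zero]

theorem mul_div_add_le_tangent {P C a x y : ℝ} (hP : 0 ≤ P) (hC : 0 ≤ C) (ha : 0 ≤ a)
    (hx : 0 < a * x + C) (hy : 0 < a * y + C) :
    P * x / (a * x + C) ≤ P * y / (a * y + C) + P * C / (a * y + C) ^ 2 * (x - y) := by
  have gap : P * y / (a * y + C) + P * C / (a * y + C) ^ 2 * (x - y) - P * x / (a * x + C)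
      = P * C * a * (x - y) ^ 2 / ((a * x + C) * (a * y + C) ^ 2) := by
    rw [div_mul_eq_mul_div, div_add_div _ _ hy.ne' (by positivity),
      div_sub_div _ _ (by positivity) hx.ne', div_eq_div_iff (by positivity) (by positivity)]
    ring
  have : 0 ≤ P * C * a * (x - y) ^ 2 / ((a * x + C) * (a * y + C) ^ 2) := by positivity
  linarith

noncomputable def waterFilling (P C a ξ : ℝ) : ℝ := max ((Real.sqrt (P / ξ) - C) / a) 0

theorem waterFilling_nonneg (P C a ξ : ℝ) : 0 ≤ waterFilling P C a ξ := le_max_right _ _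

theorem tangent_slope_waterFilling_mul_sub_le {P C a ξ x : ℝ} (hP : 0 ≤ P) (hC : 0 < C)
    (ha : 0 < a) (hξ : 0 < ξ) (hx : 0 ≤ x) :
    P * C / (a * waterFilling P C a ξ + C) ^ 2 * (x - waterFilling P C a ξ)
      ≤ C * ξ * (x - waterFilling P C a ξ) := by
  set s := Real.sqrt (P / ξ)
  have hs : s ^ 2 * ξ = P := by
    rw [Real.sq_sqrt (div_nonneg hP hξ.le), div_mul_cancel₀ P hξ.ne']
  rcases le_or_gt s C with hsC | hCs
  · have hzero : waterFilling P C a ξ = 0 :=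
      max_eq_right (div_nonpos_of_nonpos_of_nonneg (by linarith) ha.le)
    have hslope : P * C / C ^ 2 ≤ C * ξ := by
      rw [div_le_iff₀ (by positivity), ← hs]
      have : s ^ 2 ≤ C ^ 2 := pow_le_pow_left₀ (Real.sqrt_nonneg _) hsC 2
      nlinarith [mul_pos hC hξ]
    rw [hzero, mul_zero, zero_add, sub_zero]
    exact mul_le_mul_of_nonneg_right hslope hx
  · have hlevel : a * waterFilling P C a ξ + C = s := by
      rw [waterFilling, max_eq_left (div_pos (by linarith) ha).le, mul_div_cancel₀ _ ha.ne']
      ring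
    have hslope : P * C / s ^ 2 = C * ξ := by
      rw [← hs]
      field_simp [(hC.trans hCs).ne']
    rw [hlevel, hslope]

theorem optimized_random_caching_general (N : ℕ) (P : Fin N → ℝ)
    (hP : ∀ n, 0 < P n) (C A : ℝ) (hC : 0 < C) (ha : 0 < A - C + 1)
    (ξ : ℝ) (hξ : 0 < ξ)
    (hsum : ∑ n, max ((Real.sqrt (P n / ξ) - C) / (A - C + 1)) 0 = 1) :
    ∀ Ω : Fin N → ℝ, (∀ n, 0 ≤ Ω n) → ∑ n, Ω n = 1 →
      ∑ n, P n * Ω n / ((A - C + 1) * Ω n + C) ≤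
        ∑ n, P n * max ((Real.sqrt (P n / ξ) - C) / (A - C + 1)) 0 /
          ((A - C + 1) * max ((Real.sqrt (P n / ξ) - C) / (A - C + 1)) 0 + C) := by
  intro Ω hΩ hΩsum
  refine univ.sum_le_sum_of_le_add_mul_sub (fun n x ↦ P n * x / ((A - C + 1) * x + C)) Ω
    (fun n ↦ waterFilling (P n) C (A - C + 1) ξ) (C * ξ) (fun n _ ↦ ?_) (hΩsum.trans hsum.symm)
  have hΩ_level : 0 < (A - C + 1) * Ω n + C := by nlinarith [hΩ n]
  have hopt_level : 0 < (A - C + 1) * waterFilling (P n) C (A - C + 1) ξ + C := by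
    nlinarith [waterFilling_nonneg (P n) C (A - C + 1) ξ]
  exact (mul_div_add_le_tangent (hP n).le hC.le ha.le hΩ_level hopt_level).trans
    (add_le_add le_rfl (tangent_slope_waterFilling_mul_sub_le (hP n).le hC ha hξ (hΩ n)))

/-- **Optimality of the water-filling solution (Eq. (24)).** Let `P_n > 0`, `C > 0`,
`A ≥ 0` with `a := A − C + 1 > 0`, and suppose `ξ > 0` is such that
`Ω*_n := max{(√(P_n/ξ) − C)/a, 0}` satisfies `Σ_n Ω*_n = 1`. Then `Ω*` globally
maximizes `Σ_n P_n·Ω_n/(a·Ω_n + C)` over the probability simplex. -/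
theorem optimized_random_caching (N : ℕ) (hN : 1 ≤ N) (P : Fin N → ℝ)
    (hP : ∀ n, 0 < P n) (C A : ℝ) (hC : 0 < C) (hA : 0 ≤ A) (ha : 0 < A - C + 1)
    (ξ : ℝ) (hξ : 0 < ξ)
    (hsum : ∑ n, max ((Real.sqrt (P n / ξ) - C) / (A - C + 1)) 0 = 1) :
    ∀ Ω : Fin N → ℝ, (∀ n, 0 ≤ Ω n) → ∑ n, Ω n = 1 →
      ∑ n, P n * Ω n / ((A - C + 1) * Ω n + C) ≤
        ∑ n, P n * max ((Real.sqrt (P n / ξ) - C) / (A - C + 1)) 0 /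
          ((A - C + 1) * max ((Real.sqrt (P n / ξ) - C) / (A - C + 1)) 0 + C) :=
  optimized_random_caching_general N P hP C A hC ha ξ hξ hsum
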